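/- Let q be a real number with 0 < q < 1, let r ≥ 1 be an integer, let w₁,…,w_r > 0 be reals, let f be a positive integer and χ a complex Dirichlet character modulo f. Then for every complex number s, the Dirichlet-type multiple Changhee q-L-function satisfies L_{q,r}(s, χ | w₁,…,w_r) = [f]_q^{−s} · Σ_{a₁,…,a_r = 1}^{f} (Π_{k=1}^{r} χ(a_k)) · ζ_{q^f,r}( s , (w₁a₁+…+w_ra_r)/f | w₁,…,w_r ), where on the right the multiple q-zeta function is formed with q replaced by q^f. -/

import Mathlib

open Finset

/-- The q-analogue `[z]_q = (1 - q^z)/(1 - q)` for a real exponent `z`. -/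
noncomputable def qn (q z : ℝ) : ℝ := (1 - q ^ z) / (1 - q)

/-- The complex power `r^s := exp(s·log r)` of a positive real `r` (real logarithm). -/
noncomputable def rpowC (r : ℝ) (s : ℂ) : ℂ := Complex.exp (s * (Real.log r : ℂ))

/-- The Barnes-type Changhee multiple q-zeta function
`ζ_{Q,r}(s,w|w₁,…,w_r) = (Π wᵢ)·Σ_{ν} Q^{w+Σ wᵢνᵢ}/[w+Σ wᵢνᵢ]_Q^s`. -/
noncomputable def multZeta (Q : ℝ) (r : ℕ) (w : ℝ) (ws : Fin r → ℝ) (s : ℂ) : ℂ :=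
  ((∏ i, ws i : ℝ) : ℂ) * ∑' ν : Fin r → ℕ,
    ((Q ^ (w + ∑ i, ws i * (ν i : ℝ)) : ℝ) : ℂ)
      / rpowC (qn Q (w + ∑ i, ws i * (ν i : ℝ))) s

/-- The Dirichlet-type multiple Changhee q-L-function
`L_{q,r}(s,χ|w₁,…,w_r) = (Π wⱼ)·Σ_{n₁,…,n_r ≥ 1} (Π χ(n_k))·q^{Σ w_m n_m}/[Σ w_m n_m]_q^s`. -/
noncomputable def multLw (q : ℝ) (r : ℕ) (ws : Fin r → ℝ) {f : ℕ}
    (χ : DirichletCharacter ℂ f) (s : ℂ) : ℂ :=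
  ((∏ j, ws j : ℝ) : ℂ) * ∑' ν : Fin r → ℕ, (∏ k, χ ((ν k + 1 : ℕ) : ZMod f))
    * ((q ^ (∑ m, ws m * ((ν m : ℝ) + 1)) : ℝ) : ℂ)
    / rpowC (qn q (∑ m, ws m * ((ν m : ℝ) + 1))) s

/-!
Write each index `n_k ≥ 1` as `n_k = a_k + f μ_k` with `1 ≤ a_k ≤ f` and `μ_k ≥ 0`. Then
`Σ w_k n_k = f x` with `x = (Σ w_k a_k)/f + Σ w_k μ_k`, so that `q^{Σ w_k n_k} = (q^f)^x` and
`[Σ w_k n_k]_q = [f]_q [x]_{q^f}`, while `χ(n_k) = χ(a_k)` by periodicity. Splitting the absolutely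
convergent series defining `L_{q,r}` along the residue classes `a` gives the formula.
-/

lemma rpowC_neg (ρ : ℝ) (s : ℂ) : rpowC ρ (-s) = (rpowC ρ s)⁻¹ := by
  simp only [rpowC, neg_mul, Complex.exp_neg]

lemma rpowC_mul {a b : ℝ} (ha : 0 < a) (hb : 0 < b) (s : ℂ) :
    rpowC (a * b) s = rpowC a s * rpowC b s := by
  rw [rpowC, rpowC, rpowC, Real.log_mul ha.ne' hb.ne', ← Complex.exp_add]
  push_cast
  ring_nf

lemma norm_rpowC {ρ : ℝ} (hρ : 0 < ρ) (s : ℂ) : ‖rpowC ρ s‖ = ρ ^ s.re := by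
  rw [rpowC, Complex.norm_exp, Real.rpow_def_of_pos hρ, mul_comm]
  simp [Complex.mul_re]

lemma Real.rpow_le_max_of_mem_Icc {a b x : ℝ} (ha : 0 < a) (hx : x ∈ Set.Icc a b) (t : ℝ) :
    x ^ t ≤ max (a ^ t) (b ^ t) := by
  rcases le_total 0 t with ht | ht
  · exact (Real.rpow_le_rpow (ha.le.trans hx.1) hx.2 ht).trans (le_max_right _ _)
  · exact (Real.rpow_le_rpow_of_nonpos ha hx.1 ht).trans (le_max_left _ _)

section qn

variable {q : ℝ}

lemma qn_pos (hq0 : 0 < q) (hq1 : q < 1) {x : ℝ} (hx : 0 < x) : 0 < qn q x :=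
  div_pos (sub_pos.2 (Real.rpow_lt_one hq0.le hq1 hx)) (sub_pos.2 hq1)

lemma qn_le_inv_one_sub (hq0 : 0 < q) (hq1 : q < 1) (x : ℝ) : qn q x ≤ (1 - q)⁻¹ := by
  rw [qn, div_eq_mul_inv]
  exact mul_le_of_le_one_left (inv_pos.2 (sub_pos.2 hq1)).le
    (sub_le_self _ (Real.rpow_pos_of_pos hq0 x).le)

lemma qn_le_qn (hq0 : 0 < q) (hq1 : q < 1) {x y : ℝ} (hxy : x ≤ y) : qn q x ≤ qn q y :=
  div_le_div_of_nonneg_right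
    (sub_le_sub_left (Real.rpow_le_rpow_of_exponent_ge hq0 hq1.le hxy) 1) (sub_pos.2 hq1).le

lemma qn_natCast_mul (hq0 : 0 < q) (hq1 : q < 1) {f : ℕ} (hf : 0 < f) (x : ℝ) :
    qn q (f * x) = qn q f * qn (q ^ f) x := by
  have hq : 1 - q ≠ 0 := (sub_pos.2 hq1).ne'
  have hqf : 1 - q ^ f ≠ 0 := (sub_pos.2 (pow_lt_one₀ hq0.le hq1 hf.ne')).ne'
  rw [qn, qn, qn, Real.rpow_mul hq0.le, Real.rpow_natCast]
  field_simp

end qn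

noncomputable def changheeTerm (q x : ℝ) (s : ℂ) : ℂ := ((q ^ x : ℝ) : ℂ) / rpowC (qn q x) s

lemma changheeTerm_natCast_mul {q : ℝ} (hq0 : 0 < q) (hq1 : q < 1) {f : ℕ} (hf : 0 < f)
    {x : ℝ} (hx : 0 < x) (s : ℂ) :
    changheeTerm q (f * x) s = rpowC (qn q f) (-s) * changheeTerm (q ^ f) x s := by
  have hqf : 0 < q ^ f := pow_pos hq0 f
  have hqf1 : q ^ f < 1 := pow_lt_one₀ hq0.le hq1 hf.ne'
  rw [changheeTerm, changheeTerm, qn_natCast_mul hq0 hq1 hf,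
    rpowC_mul (qn_pos hq0 hq1 (Nat.cast_pos.2 hf)) (qn_pos hqf hqf1 hx), rpowC_neg,
    Real.rpow_mul hq0.le, Real.rpow_natCast]
  ring

/-- On `[x₀, ∞)` with `x₀ > 0`, `[x]_q` stays in a compact subinterval of `(0, ∞)`. -/
lemma exists_norm_changheeTerm_le {q : ℝ} (hq0 : 0 < q) (hq1 : q < 1) {x₀ : ℝ} (hx₀ : 0 < x₀)
    (s : ℂ) : ∃ K, ∀ x, x₀ ≤ x → ‖changheeTerm q x s‖ ≤ K * q ^ x := by
  refine ⟨max (qn q x₀ ^ (-s.re)) ((1 - q)⁻¹ ^ (-s.re)), fun x hx => ?_⟩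
  have hqx : 0 < qn q x := qn_pos hq0 hq1 (hx₀.trans_le hx)
  have hmem : qn q x ∈ Set.Icc (qn q x₀) (1 - q)⁻¹ :=
    ⟨qn_le_qn hq0 hq1 hx, qn_le_inv_one_sub hq0 hq1 x⟩
  rw [changheeTerm, norm_div, norm_rpowC hqx, Complex.norm_real,
    Real.norm_of_nonneg (Real.rpow_pos_of_pos hq0 x).le, div_eq_mul_inv,
    ← Real.rpow_neg hqx.le, mul_comm]
  exact mul_le_mul_of_nonneg_right
    (Real.rpow_le_max_of_mem_Icc (qn_pos hq0 hq1 hx₀) hmem _) (Real.rpow_pos_of_pos hq0 x).le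

lemma summable_prod_pow {n : ℕ} {c : Fin n → ℝ} (h0 : ∀ i, 0 ≤ c i) (h1 : ∀ i, c i < 1) :
    Summable fun ν : Fin n → ℕ => ∏ i, c i ^ ν i := by
  induction n with
  | zero => exact Summable.of_finite
  | succ n ih =>
    have hprod := (summable_geometric_of_lt_one (h0 0) (h1 0)).mul_of_nonneg
      (ih (c := fun i => c i.succ) (fun i => h0 _) (fun i => h1 _))
      (fun k => pow_nonneg (h0 0) k) (fun μ => Finset.prod_nonneg fun i _ => pow_nonneg (h0 _) _)
    refine ((Fin.consEquiv fun _ => ℕ).symm.summable_iff.2 hprod).congr fun ν => ?_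
    simp [Fin.prod_univ_succ, Fin.consEquiv, Fin.tail]

lemma summable_rpow_sum_mul_succ {r : ℕ} {q : ℝ} (hq0 : 0 < q) (hq1 : q < 1) {ws : Fin r → ℝ}
    (hws : ∀ i, 0 < ws i) :
    Summable fun ν : Fin r → ℕ => q ^ ∑ m, ws m * ((ν m : ℝ) + 1) := by
  refine ((summable_prod_pow (c := fun i => q ^ ws i) (fun i => (Real.rpow_pos_of_pos hq0 _).le)
    (fun i => Real.rpow_lt_one hq0.le hq1 (hws i))).mul_left (∏ i, q ^ ws i)).congr fun ν => ?_
  rw [Real.rpow_sum_of_pos hq0, ← Finset.prod_mul_distrib]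
  refine Finset.prod_congr rfl fun i _ => ?_
  rw [Real.rpow_mul hq0.le, ← Nat.cast_succ, Real.rpow_natCast, pow_succ, mul_comm]

lemma summable_multLw_term {r : ℕ} (hr : 1 ≤ r) {q : ℝ} (hq0 : 0 < q) (hq1 : q < 1)
    {ws : Fin r → ℝ} (hws : ∀ i, 0 < ws i) {f : ℕ} (χ : DirichletCharacter ℂ f) (s : ℂ) :
    Summable fun ν : Fin r → ℕ => (∏ k, χ ((ν k + 1 : ℕ) : ZMod f))
      * changheeTerm q (∑ m, ws m * ((ν m : ℝ) + 1)) s := by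
  have : Nonempty (Fin r) := Fin.pos_iff_nonempty.1 hr
  obtain ⟨K, hK⟩ := exists_norm_changheeTerm_le hq0 hq1
    (Finset.sum_pos (fun i _ => hws i) Finset.univ_nonempty) s
  refine Summable.of_norm_bounded ((summable_rpow_sum_mul_succ hq0 hq1 hws).mul_left K)
    fun ν => ?_
  rw [norm_mul]
  refine (mul_le_of_le_one_left (norm_nonneg _) ?_).trans (hK _ ?_)
  · rw [norm_prod]
    exact Finset.prod_le_one (fun k _ => norm_nonneg _) fun k _ => χ.norm_le_one _
  · exact Finset.sum_le_sum fun i _ => le_mul_of_one_le_right (hws i).le (by simp)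

def piAddMulEquiv (ι : Type*) {f : ℕ} (hf : 0 < f) : ((ι → Fin f) × (ι → ℕ)) ≃ (ι → ℕ) where
  toFun p i := p.1 i + f * p.2 i
  invFun ν := (fun i => ⟨ν i % f, Nat.mod_lt _ hf⟩, fun i => ν i / f)
  left_inv p := by
    ext i
    · simp [Nat.add_mul_mod_self_left, Nat.mod_eq_of_lt (p.1 i).isLt]
    · simp [Nat.add_mul_div_left _ _ hf, Nat.div_eq_of_lt (p.1 i).isLt]
  right_inv ν := funext fun i => Nat.mod_add_div _ _

lemma tsum_eq_sum_tsum_piAddMulEquiv {ι E : Type*} [Fintype ι] [DecidableEq ι]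
    [NormedAddCommGroup E] [CompleteSpace E] {f : ℕ} (hf : 0 < f) {g : (ι → ℕ) → E}
    (hg : Summable g) :
    ∑' ν, g ν = ∑ a : ι → Fin f, ∑' μ, g (piAddMulEquiv ι hf (a, μ)) := by
  rw [← (piAddMulEquiv ι hf).tsum_eq]
  exact (Summable.tsum_prod (f := fun p => g (piAddMulEquiv ι hf p))
    ((piAddMulEquiv ι hf).summable_iff.2 hg)).trans (tsum_fintype _)

lemma sum_mul_piAddMulEquiv_succ {r f : ℕ} (hf : 0 < f) (ws : Fin r → ℝ) (a : Fin r → Fin f)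
    (μ : Fin r → ℕ) :
    ∑ m, ws m * ((piAddMulEquiv (Fin r) hf (a, μ) m : ℝ) + 1)
      = f * ((∑ i, ws i * (((a i : ℕ) : ℝ) + 1)) / f + ∑ i, ws i * (μ i : ℝ)) := by
  have hfR : (f : ℝ) ≠ 0 := Nat.cast_ne_zero.2 hf.ne'
  rw [mul_add, mul_div_cancel₀ _ hfR, Finset.mul_sum, ← Finset.sum_add_distrib]
  refine Finset.sum_congr rfl fun m _ => ?_
  simp only [piAddMulEquiv, Equiv.coe_fn_mk, Nat.cast_add, Nat.cast_mul]
  ring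

lemma multLw_term_piAddMulEquiv {r : ℕ} (hr : 1 ≤ r) {q : ℝ} (hq0 : 0 < q) (hq1 : q < 1) {ws : Fin r → ℝ}
    (hws : ∀ i, 0 < ws i) {f : ℕ} (hf : 0 < f) (χ : DirichletCharacter ℂ f) (s : ℂ)
    (a : Fin r → Fin f) (μ : Fin r → ℕ) :
    (∏ k, χ ((piAddMulEquiv (Fin r) hf (a, μ) k + 1 : ℕ) : ZMod f))
      * changheeTerm q (∑ m, ws m * ((piAddMulEquiv (Fin r) hf (a, μ) m : ℝ) + 1)) s
      = rpowC (qn q f) (-s) * ((∏ k, χ (((a k : ℕ) + 1 : ℕ) : ZMod f))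
        * changheeTerm (q ^ f) ((∑ i, ws i * (((a i : ℕ) : ℝ) + 1)) / f
          + ∑ i, ws i * (μ i : ℝ)) s) := by
  have hχ : ∀ k, χ ((piAddMulEquiv (Fin r) hf (a, μ) k + 1 : ℕ) : ZMod f)
      = χ (((a k : ℕ) + 1 : ℕ) : ZMod f) := fun k => by
    simp [piAddMulEquiv]
  have hx : 0 < (∑ i, ws i * (((a i : ℕ) : ℝ) + 1)) / f + ∑ i, ws i * (μ i : ℝ) :=
    have : Nonempty (Fin r) := Fin.pos_iff_nonempty.1 hr
    add_pos_of_pos_of_nonneg (div_pos (Finset.sum_pos (fun i _ => mul_pos (hws i) (by positivity))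
      Finset.univ_nonempty) (Nat.cast_pos.2 hf))
      (Finset.sum_nonneg fun i _ => mul_nonneg (hws i).le (Nat.cast_nonneg _))
  rw [Finset.prod_congr rfl fun k _ => hχ k, sum_mul_piAddMulEquiv_succ,
    changheeTerm_natCast_mul hq0 hq1 hf hx]
  ring

/-- Relation between the Dirichlet-type multiple Changhee q-L-function and the multiple
q-zeta function formed with `q^f`:
`L_{q,r}(s,χ|w₁,…,w_r) = [f]_q^{-s}·Σ_{a₁,…,a_r=1}^{f} (Π χ(a_k))·
  ζ_{q^f,r}(s,(w₁a₁+…+w_ra_r)/f | w₁,…,w_r)`. -/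
theorem multLw_eq_sum_multZeta (q : ℝ) (hq0 : 0 < q) (hq1 : q < 1)
    (r : ℕ) (hr : 1 ≤ r) (ws : Fin r → ℝ) (hws : ∀ i, 0 < ws i)
    (f : ℕ) (hf : 0 < f) (χ : DirichletCharacter ℂ f) (s : ℂ) :
    multLw q r ws χ s = rpowC (qn q (f : ℝ)) (-s)
      * ∑ a : Fin r → Fin f, (∏ k, χ (((a k : ℕ) + 1 : ℕ) : ZMod f))
        * multZeta (q ^ f) r ((∑ i, ws i * (((a i : ℕ) : ℝ) + 1)) / (f : ℝ)) ws s := by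
  calc multLw q r ws χ s
      = ((∏ j, ws j : ℝ) : ℂ) * ∑' ν : Fin r → ℕ, (∏ k, χ ((ν k + 1 : ℕ) : ZMod f))
          * changheeTerm q (∑ m, ws m * ((ν m : ℝ) + 1)) s := by
        simp only [multLw, changheeTerm, mul_div_assoc]
    _ = ((∏ j, ws j : ℝ) : ℂ) * ∑ a : Fin r → Fin f, ∑' μ : Fin r → ℕ,
          rpowC (qn q f) (-s) * ((∏ k, χ (((a k : ℕ) + 1 : ℕ) : ZMod f))
            * changheeTerm (q ^ f) ((∑ i, ws i * (((a i : ℕ) : ℝ) + 1)) / f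
              + ∑ i, ws i * (μ i : ℝ)) s) := by
        rw [tsum_eq_sum_tsum_piAddMulEquiv hf (summable_multLw_term hr hq0 hq1 hws χ s)]
        simp only [multLw_term_piAddMulEquiv hr hq0 hq1 hws hf]
    _ = _ := by
        simp only [tsum_mul_left, multZeta, changheeTerm, Finset.mul_sum]
        exact Finset.sum_congr rfl fun a _ => by ring
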